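/- arXiv:1508.04949 — 4 statements merged into one kernel-verified Lean document; each statement's English description precedes it below -/
import Mathlib

section
/- For every natural number n, ∑_{k=0}^n 2^k · L_k = 2^{n+1} · F_{n+1} (Sury's identity). -/
def lucas : ℕ → ℕ
  | 0 => 2
  | 1 => 1
  | n + 2 => lucas (n + 1) + lucas n

theorem lucas_add_fib : ∀ n, lucas n + Nat.fib n = 2 * Nat.fib (n + 1)
  | 0 => rfl
  | 1 => rfl
  | n + 2 => by
    have h₁ := lucas_add_fib (n + 1)
    have h₀ := lucas_add_fib n
    simp only [lucas, Nat.fib_add_two] at h₁ ⊢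
    omega

theorem sury (n : ℕ) :
    ∑ k ∈ Finset.range (n + 1), 2 ^ k * lucas k = 2 ^ (n + 1) * Nat.fib (n + 1) := by
  induction n with
  | zero => rfl
  | succ n ih =>
    calc ∑ k ∈ Finset.range (n + 2), 2 ^ k * lucas k
        = 2 ^ (n + 1) * (lucas (n + 1) + Nat.fib (n + 1)) := by
          rw [Finset.sum_range_succ, ih, mul_add, add_comm]
      _ = 2 ^ (n + 2) * Nat.fib (n + 2) := by
          rw [lucas_add_fib, ← mul_assoc, ← pow_succ]
end

section
/- For every natural number n, ∑_{k=0}^n 3^k · (L_k + F_{k+1}) = 3^{n+1} · F_{n+1}. -/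
theorem lucas_succ_eq_fib_add_fib_add_two (n : ℕ) :
    lucas (n + 1) = Nat.fib n + Nat.fib (n + 2) := by
  induction n using Nat.twoStepInduction with
  | zero => rfl
  | one => rfl
  | more n ih₁ ih₂ =>
    simp only [lucas, Nat.fib_add_two] at *
    omega

theorem sury_three (n : ℕ) :
    ∑ k ∈ Finset.range (n + 1), 3 ^ k * (lucas k + Nat.fib (k + 1)) =
      3 ^ (n + 1) * Nat.fib (n + 1) := by
  induction n with
  | zero => rfl
  | succ n ih =>
    rw [Finset.sum_range_succ, ih, lucas_succ_eq_fib_add_fib_add_two, Nat.fib_add_two]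
    ring
end

section
/- For every natural number n, ∑_{k=0}^n (-1)^k · 2^{n-k} · L_{k+1} = (-1)^n · F_{n+1} (as integers). -/
open Finset

theorem lucas_succ_eq_fib_add_fib : ∀ n, lucas (n + 1) = Nat.fib n + Nat.fib (n + 2)
  | 0 => rfl
  | 1 => rfl
  | n + 2 => by
    rw [lucas, lucas_succ_eq_fib_add_fib n, lucas_succ_eq_fib_add_fib (n + 1)]
    simp only [Nat.fib_add_two]
    ring

theorem Finset.sum_range_succ_pow_sub_mul {R : Type*} [CommSemiring R] (a : R) (f : ℕ → R)
    (n : ℕ) :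
    ∑ k ∈ range (n + 2), a ^ (n + 1 - k) * f k =
      a * ∑ k ∈ range (n + 1), a ^ (n - k) * f k + f (n + 1) := by
  rw [sum_range_succ, Nat.sub_self, pow_zero, one_mul, mul_sum]
  congr 1
  refine sum_congr rfl fun k hk => ?_
  rw [Nat.sub_add_comm (Nat.lt_succ_iff.mp (mem_range.mp hk)), pow_succ', mul_assoc]

theorem alt_sum_two (n : ℕ) :
    ∑ k ∈ Finset.range (n + 1), (-1 : ℤ) ^ k * 2 ^ (n - k) * lucas (k + 1) =
      (-1) ^ n * Nat.fib (n + 1) := by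
  simp only [mul_comm ((-1 : ℤ) ^ _) (2 ^ _), mul_assoc]
  induction n with
  | zero => simp [lucas]
  | succ n ih =>
    rw [sum_range_succ_pow_sub_mul, ih, lucas_succ_eq_fib_add_fib, Nat.fib_add_two (n := n + 1),
      Nat.fib_add_two (n := n)]
    push_cast
    ring
end

section
/- For every natural number m ≥ 2 and every natural number n, (m^2 + m - 1) · ∑_{k=0}^n m^k · F_k = m^{n+1} · (F_{n+1} + m·F_n) - m (as integers). -/
theorem mul_sum_range_pow_mul_fib {R : Type*} [CommRing R] (x : R) (n : ℕ) :
    (x ^ 2 + x - 1) * ∑ k ∈ Finset.range (n + 1), x ^ k * Nat.fib k =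
      x ^ (n + 1) * (Nat.fib (n + 1) + x * Nat.fib n) - x := by
  induction n with
  | zero => simp
  | succ n ih =>
    rw [Finset.sum_range_succ, mul_add, ih, Nat.fib_add_two, Nat.cast_add]
    ring

theorem sum_pow_mul_fib_general (m n : ℕ) :
    ((m : ℤ) ^ 2 + m - 1) * ∑ k ∈ Finset.range (n + 1), (m : ℤ) ^ k * Nat.fib k =
      (m : ℤ) ^ (n + 1) * (Nat.fib (n + 1) + m * Nat.fib n) - m :=
  mul_sum_range_pow_mul_fib (m : ℤ) n

theorem sum_pow_mul_fib (m n : ℕ) (hm : 2 ≤ m) :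
    ((m : ℤ) ^ 2 + m - 1) * ∑ k ∈ Finset.range (n + 1), (m : ℤ) ^ k * Nat.fib k =
      (m : ℤ) ^ (n + 1) * (Nat.fib (n + 1) + m * Nat.fib n) - m :=
  sum_pow_mul_fib_general m n
end
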